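/- If unit vectors v_1,...,v_m in R^n and positive weights a_1,...,a_m satisfy I_n = Σ a_j v_j ⊗ v_j, then the convex hull of {±v_1,...,±v_m} contains the ball (1/√n)·B_2^n. -/

import Mathlib

open RealInnerProductSpace Finset

/-!
Expanding `x = ∑ a_j ⟪v_j, x⟫ v_j` writes `x` as a combination of the `±v_j` with total
coefficient mass `∑ a_j |⟪v_j, x⟫|`. Taking traces gives `∑ a_j = n`, and pairing the identity
with `x` gives `∑ a_j ⟪v_j, x⟫² = ‖x‖²`, so by Cauchy–Schwarz this mass is at most `√n ‖x‖ ≤ 1`.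
A combination of points of a convex set containing `0` with nonnegative coefficients of total
mass at most `1` stays in that set.
-/

section Convex

variable {ι E : Type*} [AddCommGroup E] [Module ℝ E]

theorem Convex.sum_smul_mem_of_sum_le_one {K : Set E} (hK : Convex ℝ K) (h0 : (0 : E) ∈ K)
    (s : Finset ι) {c : ι → ℝ} {w : ι → E} (hc : ∀ i ∈ s, 0 ≤ c i) (hc1 : ∑ i ∈ s, c i ≤ 1)
    (hw : ∀ i ∈ s, w i ∈ K) : ∑ i ∈ s, c i • w i ∈ K := by
  obtain hzero | hpos := (sum_nonneg hc).eq_or_lt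
  · rw [sum_eq_zero fun i hi => by rw [(sum_eq_zero_iff_of_nonneg hc).1 hzero.symm i hi, zero_smul]]
    exact h0
  · have hmem : ∑ i ∈ s, (c i / ∑ j ∈ s, c j) • w i ∈ K :=
      hK.sum_mem (fun i hi => div_nonneg (hc i hi) hpos.le) (by rw [← sum_div, div_self hpos.ne'])
        hw
    convert hK.smul_mem_of_zero_mem h0 hmem ⟨hpos.le, hc1⟩ using 1
    rw [smul_sum]
    refine sum_congr rfl fun i _ => ?_
    rw [smul_smul, mul_div_cancel₀ _ hpos.ne']

theorem sum_smul_mem_convexHull_union_neg [Nonempty ι] (s : Finset ι) (v : ι → E) {t : ι → ℝ}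
    (ht : ∑ i ∈ s, |t i| ≤ 1) :
    ∑ i ∈ s, t i • v i ∈ convexHull ℝ (Set.range v ∪ Set.range (fun i => -v i)) := by
  set K := convexHull ℝ (Set.range v ∪ Set.range (fun i => -v i))
  have hK : Convex ℝ K := convex_convexHull ℝ _
  have hv : ∀ i, v i ∈ K := fun i => subset_convexHull ℝ _ (Or.inl ⟨i, rfl⟩)
  have hnegv : ∀ i, -v i ∈ K := fun i => subset_convexHull ℝ _ (Or.inr ⟨i, rfl⟩)
  have h0 : (0 : E) ∈ K := by
    obtain ⟨i⟩ := ‹Nonempty ι›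
    simpa using hK (hv i) (hnegv i) (by norm_num : (0 : ℝ) ≤ 1 / 2) (by norm_num : (0 : ℝ) ≤ 1 / 2)
      (by norm_num)
  have hsign : ∀ i, t i • v i = |t i| • (if 0 ≤ t i then v i else -v i) := fun i => by
    split_ifs with h
    · rw [abs_of_nonneg h]
    · rw [abs_of_neg (not_le.1 h), neg_smul_neg]
  simp_rw [hsign]
  exact hK.sum_smul_mem_of_sum_le_one h0 s (fun i _ => abs_nonneg _) ht
    fun i _ => by split_ifs; exacts [hv i, hnegv i]

end Convex

section TightFrame

variable {ι E : Type*} [Fintype ι] [NormedAddCommGroup E] [InnerProductSpace ℝ E]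
  {a : ι → ℝ} {v : ι → E}

theorem sum_mul_inner_sq_eq_norm_sq (hI : ∀ x : E, ∑ j, a j • ⟪v j, x⟫ • v j = x) (x : E) :
    ∑ j, a j * ⟪v j, x⟫ ^ 2 = ‖x‖ ^ 2 := by
  have h := congrArg (fun z => ⟪z, x⟫) (hI x)
  simp only [sum_inner, real_inner_smul_left, real_inner_self_eq_norm_sq] at h
  simpa [sq, mul_assoc] using h

theorem nonempty_of_sum_smul_inner_smul_eq_self [Nontrivial E]
    (hI : ∀ x : E, ∑ j, a j • ⟪v j, x⟫ • v j = x) : Nonempty ι := by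
  by_contra hempty
  rw [not_nonempty_iff] at hempty
  obtain ⟨x, hx⟩ := exists_ne (0 : E)
  exact hx (by simpa using (hI x).symm)

theorem sum_mul_norm_sq_eq_finrank [FiniteDimensional ℝ E]
    (hI : ∀ x : E, ∑ j, a j • ⟪v j, x⟫ • v j = x) :
    ∑ j, a j * ‖v j‖ ^ 2 = Module.finrank ℝ E := by
  set b := stdOrthonormalBasis ℝ E
  calc ∑ j, a j * ‖v j‖ ^ 2 = ∑ j, ∑ i, a j * ⟪v j, b i⟫ ^ 2 := by
        simp_rw [← b.sum_sq_inner_left, mul_sum]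
    _ = ∑ i, ‖b i‖ ^ 2 := by rw [sum_comm]; simp_rw [sum_mul_inner_sq_eq_norm_sq hI]
    _ = Module.finrank ℝ E := by simp [b.orthonormal.1]

theorem sum_abs_mul_inner_le_sqrt_finrank_mul_norm [FiniteDimensional ℝ E] (ha : ∀ j, 0 ≤ a j)
    (hv : ∀ j, ‖v j‖ = 1) (hI : ∀ x : E, ∑ j, a j • ⟪v j, x⟫ • v j = x) (x : E) :
    ∑ j, |a j * ⟪v j, x⟫| ≤ √(Module.finrank ℝ E) * ‖x‖ := by
  have hsum : ∑ j, a j = Module.finrank ℝ E := by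
    simpa [hv] using sum_mul_norm_sq_eq_finrank hI
  have hcs : (∑ j, |a j * ⟪v j, x⟫|) ^ 2 ≤ (∑ j, a j) * ∑ j, a j * ⟪v j, x⟫ ^ 2 :=
    sum_sq_le_sum_mul_sum_of_sq_le_mul _ (fun j _ => ha j)
      (fun j _ => mul_nonneg (ha j) (sq_nonneg _)) fun j _ => by
        rw [sq_abs]; exact le_of_eq (by ring)
  rw [hsum, sum_mul_inner_sq_eq_norm_sq hI, ← Real.sq_sqrt (Nat.cast_nonneg _), ← mul_pow] at hcs
  exact abs_le_of_sq_le_sq' hcs (by positivity) |>.2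

end TightFrame

theorem john_ball_in_symmetric_hull (n m : ℕ) (hn : 0 < n)
    (v : Fin m → EuclideanSpace ℝ (Fin n)) (a : Fin m → ℝ)
    (hv : ∀ j, ‖v j‖ = 1) (ha : ∀ j, 0 < a j)
    (hI : ∀ x : EuclideanSpace ℝ (Fin n), ∑ j, a j • ⟪v j, x⟫ • v j = x) :
    Metric.closedBall (0 : EuclideanSpace ℝ (Fin n)) (1 / Real.sqrt n) ⊆
      convexHull ℝ (Set.range v ∪ Set.range (fun j => -v j)) := by
  intro x hx
  have : NeZero n := ⟨hn.ne'⟩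
  have := nonempty_of_sum_smul_inner_smul_eq_self hI
  have hx : ‖x‖ ≤ 1 / √n := by simpa using hx
  have hbound : ∑ j, |a j * ⟪v j, x⟫| ≤ 1 := by
    calc ∑ j, |a j * ⟪v j, x⟫| ≤ √n * ‖x‖ := by
          simpa using sum_abs_mul_inner_le_sqrt_finrank_mul_norm (fun j => (ha j).le) hv hI x
      _ ≤ √n * (1 / √n) := by gcongr
      _ = 1 := mul_one_div_cancel (by positivity)
  rw [← hI x]
  simp_rw [smul_smul]
  exact sum_smul_mem_convexHull_union_neg _ v hbound
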